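/- arXiv:2006.10467 — 5 statements merged into one kernel-verified Lean document; each statement's English description precedes it below -/
import Mathlib

section
/- Let z¹, z² ∈ H²(0,L) (complex-valued), λ ∈ ℂ, and q ∈ C⁰([0,L]) satisfy: z² + g = -conj(λ) z¹, (z¹)'' = -conj(λ) z², g'' = q z², z¹(0) = z²(0) = g(0) = g'(L) = 0, (z¹)'(L) - α z²(L) = 0, and additionally (z¹)'(L) = 0. Then z¹ = z² = 0. (Fattorini–Hautus-type unique continuation for the adjoint eigenvalue problem.) -/
open Set

/-!
On `[0, L]` the function `z² = -conj(λ) z¹ - g` satisfies `(z²)'' = (conj(λ)² - q) z²`.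
The two boundary conditions at `L` give `z²(L) = 0`, and `(z²)'(L) = -conj(λ) (z¹)'(L) - g'(L) = 0`,
so uniqueness for this linear second-order equation with Cauchy data at `L` forces `z² = 0`.
Then `(z¹)'' = 0` with `(z¹)'(L) = 0` and `z¹(0) = 0` gives `z¹ = 0`.
-/

section SecondOrderLinear

variable {𝕜 E : Type*} [NormedField 𝕜] [NormedAddCommGroup E] [NormedSpace 𝕜 E]

lemma lipschitzWith_companion (c : 𝕜) :
    LipschitzWith (max 1 ‖c‖₊) (fun u : E × E => (u.2, c • u.1)) := by
  simpa using LipschitzWith.prod_snd.prodMk ((lipschitzWith_smul c).comp LipschitzWith.prod_fst)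

variable [NormedSpace ℝ E]

theorem eqOn_zero_of_hasDerivAt_smul_of_eq_zero_right {p : ℝ → 𝕜} {y dy : ℝ → E} {a b : ℝ}
    (hp : ContinuousOn p (Icc a b))
    (hy : ∀ t ∈ Icc a b, HasDerivAt y (dy t) t ∧ HasDerivAt dy (p t • y t) t)
    (hyb : y b = 0) (hdyb : dy b = 0) : EqOn y 0 (Icc a b) := by
  obtain ⟨C, hC⟩ := isCompact_Icc.exists_bound_of_continuousOn hp
  have hpC : ∀ t ∈ Icc a b, ‖p t‖₊ ≤ C.toNNReal := fun t ht =>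
    NNReal.le_toNNReal_of_coe_le (hC t ht)
  have hY : ∀ t ∈ Icc a b, HasDerivAt (fun s => (y s, dy s)) (dy t, p t • y t) t :=
    fun t ht => (hy t ht).1.prodMk (hy t ht).2
  have hsol := ODE_solution_unique_of_mem_Icc_left (K := max 1 C.toNNReal) (s := fun _ => univ)
    (v := fun t u => (u.2, p t • u.1)) (g := 0)
    (fun t ht => ((lipschitzWith_companion (p t)).weaken
      (max_le_max le_rfl (hpC t (Ioc_subset_Icc_self ht)))).lipschitzOnWith)
    (fun t ht => (hY t ht).continuousAt.continuousWithinAt)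
    (fun t ht => (hY t (Ioc_subset_Icc_self ht)).hasDerivWithinAt)
    (fun _ _ => trivial) continuousOn_const
    (fun t _ => (hasDerivWithinAt_const t _ (0 : E × E)).congr_deriv (by simp [Prod.zero_eq_mk]))
    (fun _ _ => trivial) (by simp [hyb, hdyb])
  exact fun t ht => congrArg Prod.fst (hsol ht)

end SecondOrderLinear

theorem eqOn_zero_of_hasDerivAt_zero {E : Type*} [NormedAddCommGroup E] [NormedSpace ℝ E]
    {f : ℝ → E} {a b c : ℝ} (hf : ∀ x ∈ Icc a b, HasDerivAt f 0 x) (hc : c ∈ Icc a b)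
    (hfc : f c = 0) : EqOn f 0 (Icc a b) := fun x hx => by
  simpa [hfc] using (convex_Icc a b).norm_image_sub_le_of_norm_hasDerivWithin_le
    (fun y hy => (hf y hy).hasDerivWithinAt) (fun _ _ => norm_zero.le) hc hx

theorem stmt_7_general (L α : ℝ) (hα : 0 < α)
    (q : ℝ → ℝ) (hq : ContinuousOn q (Set.Icc 0 L)) (lam : ℂ)
    (z1 z2 g dz1 dg : ℝ → ℂ)
    (hrel : ∀ x ∈ Set.Icc (0:ℝ) L, z2 x + g x = -(starRingEnd ℂ lam) * z1 x)
    (hz1 : ∀ x ∈ Set.Icc (0:ℝ) L, HasDerivAt z1 (dz1 x) x ∧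
      HasDerivAt dz1 (-(starRingEnd ℂ lam) * z2 x) x)
    (hg : ∀ x ∈ Set.Icc (0:ℝ) L, HasDerivAt g (dg x) x ∧
      HasDerivAt dg ((q x : ℂ) * z2 x) x)
    (hz10 : z1 0 = 0) (hdgL : dg L = 0)
    (hBC : dz1 L - (α:ℂ) * z2 L = 0) (hdz1L : dz1 L = 0) :
    ∀ x ∈ Set.Icc (0:ℝ) L, z1 x = 0 ∧ z2 x = 0 := by
  intro x hx
  have hL : L ∈ Icc (0:ℝ) L := ⟨hx.1.trans hx.2, le_rfl⟩
  have h0 : (0:ℝ) ∈ Icc 0 L := ⟨le_rfl, hx.1.trans hx.2⟩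
  set c := starRingEnd ℂ lam
  have hz2L : z2 L = 0 := by
    have : (α:ℂ) * z2 L = 0 := by linear_combination hdz1L - hBC
    exact (mul_eq_zero.1 this).resolve_left (by exact_mod_cast hα.ne')
  have hz2_eq : ∀ t ∈ Icc 0 L, z2 t = -c * z1 t - g t := fun t ht => by
    linear_combination hrel t ht
  -- `z2` itself need not be differentiable at the endpoints; its extension `-c z1 - g` is.
  have hode : ∀ t ∈ Icc 0 L, HasDerivAt (fun s => -c * z1 s - g s) (-c * dz1 t - dg t) t ∧
      HasDerivAt (fun s => -c * dz1 s - dg s) ((c ^ 2 - q t) • (-c * z1 t - g t)) t :=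
    fun t ht => ⟨((hz1 t ht).1.const_mul (-c)).sub (hg t ht).1,
      (((hz1 t ht).2.const_mul (-c)).sub (hg t ht).2).congr_deriv
        (by rw [smul_eq_mul, ← hz2_eq t ht]; ring)⟩
  have hz2_zero : EqOn z2 0 (Icc 0 L) := fun t ht => (hz2_eq t ht).trans <|
    eqOn_zero_of_hasDerivAt_smul_of_eq_zero_right
      (continuousOn_const.sub (Complex.continuous_ofReal.comp_continuousOn hq)) hode
      (by rw [← hz2_eq L hL, hz2L]) (by simp [hdz1L, hdgL]) ht
  have hdz1_zero : EqOn dz1 0 (Icc 0 L) := eqOn_zero_of_hasDerivAt_zero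
    (fun t ht => by simpa [hz2_zero ht] using (hz1 t ht).2) hL hdz1L
  have hz1_zero : EqOn z1 0 (Icc 0 L) := eqOn_zero_of_hasDerivAt_zero
    (fun t ht => by simpa [hdz1_zero ht] using (hz1 t ht).1) h0 hz10
  exact ⟨hz1_zero hx, hz2_zero hx⟩

/-- Fattorini–Hautus-type unique continuation for the adjoint eigenvalue problem:
if `z² + g = -conj(λ) z¹`, `(z¹)'' = -conj(λ) z²`, `g'' = q z²`, with the boundary
conditions `z¹(0) = z²(0) = g(0) = g'(L) = 0`, `(z¹)'(L) - α z²(L) = 0`, and in addition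
`(z¹)'(L) = 0`, then `z¹ = z² = 0`. -/
theorem stmt_7 (L α : ℝ) (hL : 0 < L) (hα : 0 < α)
    (q : ℝ → ℝ) (hq : ContinuousOn q (Set.Icc 0 L)) (lam : ℂ)
    (z1 z2 g dz1 dg : ℝ → ℂ)
    (hrel : ∀ x ∈ Set.Icc (0:ℝ) L, z2 x + g x = -(starRingEnd ℂ lam) * z1 x)
    (hz1 : ∀ x ∈ Set.Icc (0:ℝ) L, HasDerivAt z1 (dz1 x) x ∧
      HasDerivAt dz1 (-(starRingEnd ℂ lam) * z2 x) x)
    (hg : ∀ x ∈ Set.Icc (0:ℝ) L, HasDerivAt g (dg x) x ∧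
      HasDerivAt dg ((q x : ℂ) * z2 x) x)
    (hz10 : z1 0 = 0) (hz20 : z2 0 = 0) (hg0 : g 0 = 0) (hdgL : dg L = 0)
    (hBC : dz1 L - (α:ℂ) * z2 L = 0) (hdz1L : dz1 L = 0) :
    ∀ x ∈ Set.Icc (0:ℝ) L, z1 x = 0 ∧ z2 x = 0 :=
  stmt_7_general L α hα q hq lam z1 z2 g dz1 dg hrel hz1 hg hz10 hdgL hBC hdz1L
end

section
/- Let (λ_k)_{|k| ≥ n₀+1} be complex numbers with Re λ_k < -1 for all such k, let (w_k) solve the ODEs w_k'(t) = λ_k w_k(t) + a_k v(t) + b_k v_d(t) + r_k(t), and let X solve X'(t) = A_K X(t) + Γ(t) where A_K is Hurwitz with A_Kᵀ P + P A_K = -I for a symmetric positive definite P. Suppose ‖Γ(t)‖² ≤ C₀² R(t) + 2|z_r(t)|², Σ_{|k|≥n₀+1}(|a_k|² + |b_k|²) < ∞, v_d(t) = K X(t), |v(t)| ≤ ‖X(t)‖, and Σ|r_k(t)|² ≤ R(t)/m_R with R(t) ≤ ε² C₁² (‖X(t)‖² + Σ_{|k|≥n₀+1}|w_k(t)|²).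 Then for M > 3(‖a‖² + ‖b‖²‖K‖²)/m_R and ε sufficiently small, the Lyapunov function V(t) = M X(t)ᵀ P X(t) + (1/2) Σ_{|k|≥n₀+1}|w_k(t)|² satisfies V'(t) ≤ -2κ V(t) + C₂ |z_r(t)|² for some constants κ, C₂ > 0 independent of the solution. -/
/-!
Along the flow, the Lyapunov equation `Aᵀ P + P A = -1` turns the derivative of `Xᵀ P X` into
`-‖X‖²` plus cross terms with `Γ`, which Young's inequality absorbs. Since `Re λ_k < -1`, each
residual mode obeys `d/dt |w_k|² ≤ -|w_k|² + |q_k|²` with `q_k = a_k v + b_k v_d + r_k`. The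
derivative of `∑ |w_k|²` cannot be taken termwise, so these inequalities are integrated over
`[t, s]`, summed by dominated convergence, and differentiated back at `s = t`. The inputs `q_k` are
controlled by `‖X‖²` and `R`; the choice of `M` absorbs the former and small `ε` the latter, leaving
`V' ≤ -(M/8)‖X‖² - (1/4)∑ |w_k|² + C₂ z_r²`, which dominates `-2κV`.
-/

open MeasureTheory Set Finset

theorem le_of_hasDerivAt_of_sub_le_integral {f F : ℝ → ℝ} {f' t : ℝ} (hf : HasDerivAt f f' t)
    (hF : Continuous F) (h : ∀ s, t ≤ s → f s - f t ≤ ∫ u in t..s, F u) : f' ≤ F t := by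
  set g := fun s => (∫ u in t..s, F u) - (f s - f t)
  have hg : HasDerivAt g (F t - f') t :=
    (intervalIntegral.integral_hasDerivAt_right (hF.intervalIntegrable t t)
      (hF.stronglyMeasurableAtFilter volume _) hF.continuousAt).sub (hf.sub_const _)
  have hmin : IsLocalMinOn g (Ici t) t :=
    Filter.eventually_of_mem self_mem_nhdsWithin fun s hs => by simpa [g] using h s hs
  have hcone : (1 : ℝ) ∈ posTangentConeAt (Ici t) t :=
    mem_posTangentConeAt_of_segment_subset (by simpa [segment_eq_Icc] using Set.Icc_subset_Ici_self)
  simpa using hmin.hasFDerivWithinAt_nonneg hg.hasDerivWithinAt.hasFDerivWithinAt hcone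

section TsumDifferentialInequality

variable {ι : Type*} [Countable ι] {u u' g : ι → ℝ → ℝ} {G : ℝ → ℝ}

theorem hasSum_intervalIntegral_of_nonneg {f : ι → ℝ → ℝ} {a b : ℝ} (hf : ∀ i, Measurable (f i))
    (h0 : ∀ i s, 0 ≤ f i s) (hs : ∀ s, Summable fun i => f i s)
    (hint : IntervalIntegrable (fun s => ∑' i, f i s) volume a b) :
    HasSum (fun i => ∫ s in a..b, f i s) (∫ s in a..b, ∑' i, f i s) :=
  intervalIntegral.hasSum_integral_of_dominated_convergence f
    (fun i => (hf i).aestronglyMeasurable)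
    (fun i => ae_of_all _ fun s _ => (Real.norm_of_nonneg (h0 i s)).le)
    (ae_of_all _ fun s _ => hs s) hint (ae_of_all _ fun s _ => (hs s).hasSum)

theorem tsum_sub_le_integral {a b : ℝ} (hab : a ≤ b)
    (hu : ∀ i s, HasDerivAt (u i) (u' i s) s) (hu' : ∀ i s, u' i s ≤ -u i s + g i s)
    (hu0 : ∀ i s, 0 ≤ u i s) (hsu : ∀ s, Summable fun i => u i s)
    (hSc : Continuous fun s => ∑' i, u i s)
    (hgm : ∀ i, Measurable (g i)) (hg0 : ∀ i s, 0 ≤ g i s) (hsg : ∀ s, Summable fun i => g i s)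
    (hgG : ∀ s, ∑' i, g i s ≤ G s) (hG : Continuous G) :
    (∑' i, u i b) - ∑' i, u i a ≤ ∫ s in a..b, (-(∑' i, u i s) + G s) := by
  have huc (i : ι) : Continuous (u i) :=
    continuous_iff_continuousAt.2 fun s => (hu i s).continuousAt
  have hgsum : IntervalIntegrable (fun s => ∑' i, g i s) volume a b :=
    (hG.intervalIntegrable a b).mono_fun (Measurable.tsum hgm).aestronglyMeasurable
      (ae_of_all _ fun s => by
        simpa [abs_of_nonneg (tsum_nonneg (hg0 · s))] using (hgG s).trans (le_abs_self _))
  have hgi (i : ι) : IntervalIntegrable (g i) volume a b :=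
    hgsum.mono_fun (hgm i).aestronglyMeasurable (ae_of_all _ fun s => by
      simpa [abs_of_nonneg (hg0 i s), abs_of_nonneg (tsum_nonneg (hg0 · s))]
        using (hsg s).le_tsum i fun j _ => hg0 j s)
  have hmode (i : ι) : u i b - u i a ≤ -(∫ s in a..b, u i s) + ∫ s in a..b, g i s := by
    have hint : IntervalIntegrable (fun s => -u i s + g i s) volume a b :=
      ((huc i).intervalIntegrable a b).neg.add (hgi i)
    have := intervalIntegral.sub_le_integral_of_hasDeriv_right_of_le hab (huc i).continuousOn
      (fun s _ => (hu i s).hasDerivWithinAt)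
      ((intervalIntegrable_iff_integrableOn_Icc_of_le hab).1 hint) (fun s _ => hu' i s)
    rwa [intervalIntegral.integral_add (f := fun s => -u i s) ((huc i).intervalIntegrable a b).neg
      (hgi i), intervalIntegral.integral_neg] at this
  have hsum := hasSum_le hmode ((hsu b).hasSum.sub (hsu a).hasSum)
    ((hasSum_intervalIntegral_of_nonneg (fun i => (huc i).measurable) hu0 hsu
      (hSc.intervalIntegrable a b)).neg.add (hasSum_intervalIntegral_of_nonneg hgm hg0 hsg hgsum))
  rw [intervalIntegral.integral_add (f := fun s => -∑' i, u i s) (hSc.intervalIntegrable a b).neg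
    (hG.intervalIntegrable a b), intervalIntegral.integral_neg]
  linarith [intervalIntegral.integral_mono_on hab hgsum (hG.intervalIntegrable a b)
    fun s _ => hgG s]

theorem hasDerivAt_tsum_le {S' : ℝ → ℝ}
    (hu : ∀ i s, HasDerivAt (u i) (u' i s) s) (hu' : ∀ i s, u' i s ≤ -u i s + g i s)
    (hu0 : ∀ i s, 0 ≤ u i s) (hsu : ∀ s, Summable fun i => u i s)
    (hS : ∀ s, HasDerivAt (fun s => ∑' i, u i s) (S' s) s)
    (hgm : ∀ i, Measurable (g i)) (hg0 : ∀ i s, 0 ≤ g i s) (hsg : ∀ s, Summable fun i => g i s)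
    (hgG : ∀ s, ∑' i, g i s ≤ G s) (hG : Continuous G) (t : ℝ) :
    S' t ≤ -(∑' i, u i t) + G t := by
  have hSc : Continuous fun s => ∑' i, u i s :=
    continuous_iff_continuousAt.2 fun s => (hS s).continuousAt
  exact le_of_hasDerivAt_of_sub_le_integral (F := fun s => -(∑' i, u i s) + G s) (hS t)
    (hSc.neg.add hG) fun s hts =>
    tsum_sub_le_integral hts hu hu' hu0 hsu hSc hgm hg0 hsg hgG hG

end TsumDifferentialInequality

theorem two_inner_le_of_re_le_neg_one {z q lam : ℂ} (hl : lam.re ≤ -1) :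
    2 * inner ℝ z (lam * z + q) ≤ -‖z‖ ^ 2 + ‖q‖ ^ 2 := by
  rw [Complex.inner, ← Complex.normSq_eq_norm_sq, ← Complex.normSq_eq_norm_sq]
  simp only [Complex.normSq_apply, Complex.mul_re, Complex.add_re, Complex.add_im, Complex.mul_im,
    Complex.conj_re, Complex.conj_im]
  nlinarith [sq_nonneg (z.re - q.re), sq_nonneg (z.im - q.im),
    mul_le_mul_of_nonneg_right hl (add_nonneg (mul_self_nonneg z.re) (mul_self_nonneg z.im))]

theorem norm_add₃_sq_le {E : Type*} [SeminormedAddGroup E] (x y z : E) :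
    ‖x + y + z‖ ^ 2 ≤ 3 * (‖x‖ ^ 2 + ‖y‖ ^ 2 + ‖z‖ ^ 2) := by
  nlinarith [norm_add₃_le (a := x) (b := y) (c := z), norm_nonneg (x + y + z),
    sq_nonneg (‖x‖ - ‖y‖), sq_nonneg (‖x‖ - ‖z‖), sq_nonneg (‖y‖ - ‖z‖)]

section Modes

variable {ι : Type*} (a b r : ι → ℂ) (v v' : ℝ)

theorem norm_sq_mul_add_mul_add_le (i : ι) :
    ‖a i * v + b i * v' + r i‖ ^ 2 ≤ 3 * (‖a i‖ ^ 2 * v ^ 2 + ‖b i‖ ^ 2 * v' ^ 2 + ‖r i‖ ^ 2) := by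
  simpa [norm_mul, mul_pow] using norm_add₃_sq_le (a i * v) (b i * v') (r i)

variable {a b r}

theorem summable_norm_sq_mul_add_mul_add (ha : Summable fun i => ‖a i‖ ^ 2)
    (hb : Summable fun i => ‖b i‖ ^ 2) (hr : Summable fun i => ‖r i‖ ^ 2) :
    Summable fun i => ‖a i * v + b i * v' + r i‖ ^ 2 :=
  .of_nonneg_of_le (fun _ => sq_nonneg _) (norm_sq_mul_add_mul_add_le a b r v v')
    ((((ha.mul_right _).add (hb.mul_right _)).add hr).mul_left 3)

theorem tsum_norm_sq_mul_add_mul_add_le (ha : Summable fun i => ‖a i‖ ^ 2)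
    (hb : Summable fun i => ‖b i‖ ^ 2) (hr : Summable fun i => ‖r i‖ ^ 2) :
    ∑' i, ‖a i * v + b i * v' + r i‖ ^ 2 ≤
      3 * ((∑' i, ‖a i‖ ^ 2) * v ^ 2 + (∑' i, ‖b i‖ ^ 2) * v' ^ 2 + ∑' i, ‖r i‖ ^ 2) := by
  rw [← tsum_mul_right, ← tsum_mul_right, ← (ha.mul_right _).tsum_add (hb.mul_right _),
    ← ((ha.mul_right _).add (hb.mul_right _)).tsum_add hr, ← tsum_mul_left]
  exact (summable_norm_sq_mul_add_mul_add v v' ha hb hr).tsum_le_tsum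
    (norm_sq_mul_add_mul_add_le a b r v v')
    ((((ha.mul_right _).add (hb.mul_right _)).add hr).mul_left 3)

end Modes

theorem hasDerivAt_tsum_norm_sq_le {ι : Type*} [Countable ι] {w q : ι → ℝ → ℂ} {lam : ι → ℂ}
    {S' G : ℝ → ℝ} (hlam : ∀ i, (lam i).re ≤ -1)
    (hw : ∀ i s, HasDerivAt (w i) (lam i * w i s + q i s) s)
    (hsw : ∀ s, Summable fun i => ‖w i s‖ ^ 2)
    (hS : ∀ s, HasDerivAt (fun s => ∑' i, ‖w i s‖ ^ 2) (S' s) s)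
    (hsq : ∀ s, Summable fun i => ‖q i s‖ ^ 2) (hqG : ∀ s, ∑' i, ‖q i s‖ ^ 2 ≤ G s)
    (hG : Continuous G) (t : ℝ) :
    S' t ≤ -(∑' i, ‖w i t‖ ^ 2) + G t := by
  have hqm (i : ι) : Measurable (q i) := by
    have hwc : Continuous (w i) := continuous_iff_continuousAt.2 fun s => (hw i s).continuousAt
    have : q i = fun s => deriv (w i) s - lam i * w i s := by
      funext s; rw [(hw i s).deriv]; ring
    exact this ▸ (measurable_deriv _).sub (hwc.measurable.const_mul _)
  exact hasDerivAt_tsum_le (fun i s => (hw i s).norm_sq)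
    (fun i s => two_inner_le_of_re_le_neg_one (hlam i)) (fun _ _ => sq_nonneg _) hsw hS
    (fun i => (hqm i).norm.pow_const 2) (fun _ _ => sq_nonneg _) hsq hqG hG t

section QuadraticForm

open Matrix

variable {n : Type*} [Fintype n]

theorem hasDerivAt_sum_sum_mul_mul (P : Matrix n n ℝ) {X : ℝ → n → ℝ} {X' : n → ℝ} {t : ℝ}
    (hX : ∀ i, HasDerivAt (fun s => X s i) (X' i) t) :
    HasDerivAt (fun s => ∑ i, ∑ j, X s i * P i j * X s j)
      (∑ i, ∑ j, (X' i * P i j * X t j + X t i * P i j * X' j)) t :=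
  HasDerivAt.fun_sum fun i _ => HasDerivAt.fun_sum fun j _ =>
    ((hX i).mul_const (P i j)).mul (hX j)

theorem sum_sum_mul_mul_le (P : Matrix n n ℝ) (x y : n → ℝ) :
    ∑ i, ∑ j, x i * P i j * y j ≤ (∑ i, ∑ j, |P i j|) * (√(∑ i, x i ^ 2) * √(∑ i, y i ^ 2)) := by
  have hcoord (z : n → ℝ) (i : n) : |z i| ≤ √(∑ i, z i ^ 2) :=
    Real.abs_le_sqrt (single_le_sum (f := fun i => z i ^ 2) (fun _ _ => sq_nonneg _) (mem_univ i))
  rw [sum_mul]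
  refine sum_le_sum fun i _ => ?_
  rw [sum_mul]
  refine sum_le_sum fun j _ => ?_
  calc x i * P i j * y j ≤ |x i| * |P i j| * |y j| := by
        rw [← abs_mul, ← abs_mul]; exact le_abs_self _
    _ ≤ √(∑ i, x i ^ 2) * |P i j| * √(∑ i, y i ^ 2) := by gcongr <;> apply hcoord
    _ = _ := by ring

variable [DecidableEq n]

theorem sum_sum_mulVec_add_eq_neg_of_lyapunov {A P : Matrix n n ℝ}
    (hL : A.transpose * P + P * A = -1) (y : n → ℝ) :
    ∑ i, ∑ j, ((A *ᵥ y) i * P i j * y j + y i * P i j * (A *ᵥ y) j) = -∑ i, y i ^ 2 := by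
  have h₁ : ∑ i, ∑ j, (A *ᵥ y) i * P i j * y j = y ⬝ᵥ (A.transpose * P) *ᵥ y := by
    rw [← Matrix.mulVec_mulVec, Matrix.dotProduct_mulVec, Matrix.vecMul_transpose]
    simp only [dotProduct, Matrix.mulVec, mul_sum]
    exact sum_congr rfl fun i _ => sum_congr rfl fun j _ => by ring
  have h₂ : ∑ i, ∑ j, y i * P i j * (A *ᵥ y) j = y ⬝ᵥ (P * A) *ᵥ y := by
    rw [← Matrix.mulVec_mulVec]
    simp only [dotProduct, Matrix.mulVec, mul_sum]
    exact sum_congr rfl fun i _ => sum_congr rfl fun j _ => sum_congr rfl fun k _ => by ring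
  simp only [sum_add_distrib]
  rw [h₁, h₂, ← dotProduct_add, ← Matrix.add_mulVec, hL]
  simp [Matrix.neg_mulVec, dotProduct, sq]

theorem lyapunov_deriv_le {A P : Matrix n n ℝ} (hL : A.transpose * P + P * A = -1)
    (y γ : n → ℝ) :
    ∑ i, ∑ j, (((A *ᵥ y) i + γ i) * P i j * y j + y i * P i j * ((A *ᵥ y) j + γ j)) ≤
      -(3 / 4) * ∑ i, y i ^ 2 + 4 * (∑ i, ∑ j, |P i j|) ^ 2 * ∑ i, γ i ^ 2 := by
  have hsplit : ∑ i, ∑ j, (((A *ᵥ y) i + γ i) * P i j * y j + y i * P i j * ((A *ᵥ y) j + γ j))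
      = ∑ i, ∑ j, ((A *ᵥ y) i * P i j * y j + y i * P i j * (A *ᵥ y) j)
        + (∑ i, ∑ j, γ i * P i j * y j + ∑ i, ∑ j, y i * P i j * γ j) := by
    simp only [← sum_add_distrib]
    exact sum_congr rfl fun i _ => sum_congr rfl fun j _ => by ring
  rw [hsplit, sum_sum_mulVec_add_eq_neg_of_lyapunov hL]
  have h₁ := sum_sum_mul_mul_le P γ y
  have h₂ := sum_sum_mul_mul_le P y γ
  have hy : √(∑ i, y i ^ 2) ^ 2 = ∑ i, y i ^ 2 := Real.sq_sqrt (by positivity)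
  have hγ : √(∑ i, γ i ^ 2) ^ 2 = ∑ i, γ i ^ 2 := Real.sq_sqrt (by positivity)
  -- AM-GM: `2 p |γ| |y| ≤ |y|² / 4 + 4 p² |γ|²`
  nlinarith [sq_nonneg (√(∑ i, y i ^ 2) - 4 * (∑ i, ∑ j, |P i j|) * √(∑ i, γ i ^ 2))]

end QuadraticForm

theorem residual_energy_deriv_le {ι : Type*} [Countable ι] {w r : ι → ℝ → ℂ}
    {lam a b : ι → ℂ} {v v' x R S' : ℝ → ℝ} {na nb K mR c : ℝ} (hmR : 0 < mR)
    (hlam : ∀ i, (lam i).re ≤ -1)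
    (hw : ∀ s i, HasDerivAt (w i) (lam i * w i s + a i * (v s : ℂ) + b i * (v' s : ℂ) + r i s) s)
    (hsw : ∀ s, Summable fun i => ‖w i s‖ ^ 2)
    (hS : ∀ s, HasDerivAt (fun s => ∑' i, ‖w i s‖ ^ 2) (S' s) s)
    (hsa : Summable fun i => ‖a i‖ ^ 2) (hsb : Summable fun i => ‖b i‖ ^ 2)
    (hna : ∑' i, ‖a i‖ ^ 2 ≤ na / mR) (hnb : ∑' i, ‖b i‖ ^ 2 ≤ nb / mR)
    (hsr : ∀ s, Summable fun i => ‖r i s‖ ^ 2) (hr : ∀ s, ∑' i, ‖r i s‖ ^ 2 ≤ R s / mR)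
    (hx : Continuous x) (hv : ∀ s, v s ^ 2 ≤ x s) (hv' : ∀ s, v' s ^ 2 ≤ K ^ 2 * x s)
    (hR : ∀ s, R s ≤ c * (x s + ∑' i, ‖w i s‖ ^ 2)) (t : ℝ) :
    S' t ≤ -(∑' i, ‖w i t‖ ^ 2) + 3 * (na + nb * K ^ 2) / mR * x t
      + 3 * (c * (x t + ∑' i, ‖w i t‖ ^ 2)) / mR := by
  have hSc : Continuous fun s => ∑' i, ‖w i s‖ ^ 2 :=
    continuous_iff_continuousAt.2 fun s => (hS s).continuousAt
  have hna0 : 0 ≤ na / mR := (tsum_nonneg fun _ => sq_nonneg _).trans hna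
  have hnb0 : 0 ≤ nb / mR := (tsum_nonneg fun _ => sq_nonneg _).trans hnb
  have hqG (s : ℝ) : ∑' i, ‖a i * v s + b i * v' s + r i s‖ ^ 2 ≤
      3 * (na / mR * x s + nb / mR * (K ^ 2 * x s) + c * (x s + ∑' i, ‖w i s‖ ^ 2) / mR) := by
    refine (tsum_norm_sq_mul_add_mul_add_le _ _ hsa hsb (hsr s)).trans ?_
    gcongr
    · exact hv s
    · exact hv' s
    · exact (hr s).trans (by gcongr; exact hR s)
  refine (hasDerivAt_tsum_norm_sq_le hlam (fun i s => by simpa only [add_assoc] using hw s i) hsw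
    hS (fun s => summable_norm_sq_mul_add_mul_add _ _ hsa hsb (hsr s)) hqG (by fun_prop)
    t).trans_eq ?_
  ring

theorem sq_mul_le_of_le_sqrt_div {ε c D : ℝ} (hε : 0 ≤ ε) (hc : 0 ≤ c) (hD : 0 ≤ D)
    (h : ε ≤ √(c / (D + 1))) : ε ^ 2 * D ≤ c := by
  have := (Real.le_sqrt hε (by positivity)).1 h
  rw [le_div_iff₀ (by positivity)] at this
  nlinarith [sq_nonneg ε]

theorem lyapunov_decay_of_estimates {M p c₁ C₀ C₁ m_R ε x S R z Q' V V' : ℝ}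
    (hM0 : 0 < M) (hp : 0 ≤ p) (hx : 0 ≤ x) (hS : 0 ≤ S) (hc₁ : c₁ ≤ M)
    (hε : ε ^ 2 * (4 * M * p ^ 2 * C₀ ^ 2 * C₁ ^ 2 + 3 / 2 * C₁ ^ 2 / m_R) ≤ min (M / 8) (1 / 4))
    (hR : R ≤ ε ^ 2 * C₁ ^ 2 * (x + S))
    (hQ' : Q' ≤ -(3 / 4) * x + 4 * p ^ 2 * (C₀ ^ 2 * R + 2 * z ^ 2))
    (hS' : 2 * (V' - M * Q') ≤ -S + c₁ * x + 3 * (ε ^ 2 * C₁ ^ 2 * (x + S)) / m_R)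
    (hV : V ≤ (p + 1) * (M * x + 1 / 2 * S)) :
    V' ≤ -2 * (1 / (16 * (p + 1))) * V + (8 * M * p ^ 2 + 1) * z ^ 2 := by
  have hMQ' : M * Q' ≤ M * (-(3 / 4) * x + 4 * p ^ 2 * (C₀ ^ 2 * (ε ^ 2 * C₁ ^ 2 * (x + S))
      + 2 * z ^ 2)) := by
    gcongr
    exact hQ'.trans (by gcongr)
  have hεx := mul_le_mul_of_nonneg_right (hε.trans (min_le_left _ _)) hx
  have hεS := mul_le_mul_of_nonneg_right (hε.trans (min_le_right _ _)) hS
  have hc₁x := mul_le_mul_of_nonneg_right hc₁ hx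
  have hκV : 2 * (1 / (16 * (p + 1))) * V ≤ (M * x + 1 / 2 * S) / 8 := by
    calc _ ≤ 2 * (1 / (16 * (p + 1))) * ((p + 1) * (M * x + 1 / 2 * S)) := by gcongr
      _ = _ := by field_simp; ring
  linear_combination (1 / 2) * hS' + hMQ' + (1 / 2) * hc₁x + hεx + hεS + hκV + sq_nonneg z
    + 3 / 16 * hS

theorem stmt_9_general (m n₀ : ℕ)
    (lam a b : {k : ℤ // (n₀ : ℤ) + 1 ≤ |k|} → ℂ)
    (hlam : ∀ k, (lam k).re < -1)
    (P A_K : Matrix (Fin m) (Fin m) ℝ)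
    (hLyap : A_K.transpose * P + P * A_K = -1)
    (KK : Fin m → ℝ) (Knorm : ℝ) (hKn : ∑ i, (KK i)^2 ≤ Knorm^2)
    (m_R C₀ C₁ na2 nb2 M : ℝ) (hmR : 0 < m_R)
    (hsa : Summable (fun k => ‖a k‖^2)) (hsb : Summable (fun k => ‖b k‖^2))
    (hna : ∑' k, ‖a k‖^2 ≤ na2 / m_R) (hnb : ∑' k, ‖b k‖^2 ≤ nb2 / m_R)
    (hM : M > 3 * (na2 + nb2 * Knorm^2) / m_R) :
    ∃ ε₀ > 0, ∃ κ > 0, ∃ C₂ > 0,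
      ∀ ε : ℝ, 0 < ε → ε ≤ ε₀ →
      ∀ (X Γ : ℝ → Fin m → ℝ)
        (w r : {k : ℤ // (n₀ : ℤ) + 1 ≤ |k|} → ℝ → ℂ)
        (v v_d z_r R V V' : ℝ → ℝ),
        (∀ t i, HasDerivAt (fun s => X s i) ((A_K.mulVec (X t)) i + Γ t i) t) →
        (∀ t k, HasDerivAt (w k)
          (lam k * w k t + a k * (v t : ℂ) + b k * (v_d t : ℂ) + r k t) t) →
        (∀ t, v_d t = ∑ i, KK i * X t i) →
        (∀ t, |v t| ≤ Real.sqrt (∑ i, (X t i)^2)) →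
        (∀ t, ∑ i, (Γ t i)^2 ≤ C₀^2 * R t + 2 * (z_r t)^2) →
        (∀ t, Summable (fun k => ‖r k t‖^2)) →
        (∀ t, ∑' k, ‖r k t‖^2 ≤ R t / m_R) →
        (∀ t, Summable (fun k => ‖w k t‖^2)) →
        (∀ t, 0 ≤ R t) →
        (∀ t, R t ≤ ε^2 * C₁^2 * ((∑ i, (X t i)^2) + ∑' k, ‖w k t‖^2)) →
        (∀ t, V t = M * (∑ i, ∑ j, X t i * P i j * X t j)
            + (1/2) * ∑' k, ‖w k t‖^2) →
        (∀ t, HasDerivAt V (V' t) t) →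
        ∀ t, V' t ≤ -2 * κ * V t + C₂ * (z_r t)^2 := by
  have hM0 : 0 < M := by
    refine lt_of_le_of_lt ?_ hM
    have hna0 : 0 ≤ na2 / m_R := (tsum_nonneg fun _ => sq_nonneg _).trans hna
    have hnb0 : 0 ≤ nb2 / m_R := (tsum_nonneg fun _ => sq_nonneg _).trans hnb
    rw [show 3 * (na2 + nb2 * Knorm ^ 2) / m_R = 3 * (na2 / m_R) + 3 * (nb2 / m_R) * Knorm ^ 2 by
      ring]
    positivity
  set p := ∑ i, ∑ j, |P i j|
  set D := 4 * M * p ^ 2 * C₀ ^ 2 * C₁ ^ 2 + 3 / 2 * C₁ ^ 2 / m_R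
  refine ⟨√(min (M / 8) (1 / 4) / (D + 1)), by positivity, 1 / (16 * (p + 1)), by positivity,
    8 * M * p ^ 2 + 1, by positivity, ?_⟩
  intro ε hε hεε₀ X Γ w r v v_d z_r R V V' hX hw hvd hv hΓ hsr hr hsw _ hRb hV hV' t
  have hQ (s : ℝ) := hasDerivAt_sum_sum_mul_mul P (hX s)
  have hS (s : ℝ) : HasDerivAt (fun s => ∑' k, ‖w k s‖ ^ 2)
      (2 * (V' s - M * ∑ i, ∑ j, ((A_K.mulVec (X s) i + Γ s i) * P i j * X s j
        + X s i * P i j * (A_K.mulVec (X s) j + Γ s j)))) s := by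
    have : (fun s => ∑' k, ‖w k s‖ ^ 2) =
        fun s => 2 * (V s - M * ∑ i, ∑ j, X s i * P i j * X s j) :=
      funext fun s => by rw [hV s]; ring
    exact this ▸ ((hV' s).sub ((hQ s).const_mul M)).const_mul 2
  have hXc (i : Fin m) : Continuous fun s => X s i :=
    continuous_iff_continuousAt.2 fun s => (hX s i).continuousAt
  have hv2 (s : ℝ) : v s ^ 2 ≤ ∑ i, X s i ^ 2 := by
    simpa using (Real.le_sqrt (abs_nonneg _) (by positivity)).1 (hv s)
  have hvd2 (s : ℝ) : v_d s ^ 2 ≤ Knorm ^ 2 * ∑ i, X s i ^ 2 := by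
    rw [hvd s]
    exact (sum_mul_sq_le_sq_mul_sq _ _ _).trans (by gcongr)
  have hS' := residual_energy_deriv_le hmR (fun k => (hlam k).le) hw hsw hS hsa hsb hna hnb
    hsr hr (by fun_prop) hv2 hvd2 hRb t
  have hx : 0 ≤ ∑ i, X t i ^ 2 := by positivity
  have hS0 : 0 ≤ ∑' k, ‖w k t‖ ^ 2 := tsum_nonneg fun _ => sq_nonneg _
  have hVle : V t ≤ (p + 1) * (M * ∑ i, X t i ^ 2 + 1 / 2 * ∑' k, ‖w k t‖ ^ 2) := by
    have hXPX := sum_sum_mul_mul_le P (X t) (X t)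
    rw [Real.mul_self_sqrt hx] at hXPX
    rw [hV t]
    linear_combination mul_le_mul_of_nonneg_left hXPX hM0.le + mul_nonneg hM0.le hx + p / 2 * hS0
  exact lyapunov_decay_of_estimates hM0 (by positivity) hx hS0 hM.le
    (sq_mul_le_of_le_sqrt_div hε.le (by positivity) (by positivity) hεε₀) (hRb t)
    ((lyapunov_deriv_le hLyap (X t) (Γ t)).trans (by gcongr; exact hΓ t)) hS' hVle

/-- Lyapunov decay for the closed-loop system: finite-dimensional stabilized truncated
model coupled with the exponentially stable residual modes.  For `M` large enough and
`ε` small enough, the Lyapunov function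
`V(t) = M X(t)ᵀ P X(t) + (1/2) Σ_{|k| ≥ n₀+1} |w_k(t)|²`
satisfies `V'(t) ≤ -2κ V(t) + C₂ |z_r(t)|²` with constants independent of the solution. -/
theorem stmt_9 (m n₀ : ℕ)
    (lam a b : {k : ℤ // (n₀ : ℤ) + 1 ≤ |k|} → ℂ)
    (hlam : ∀ k, (lam k).re < -1)
    (P A_K : Matrix (Fin m) (Fin m) ℝ)
    (hPsymm : P.IsSymm) (hPpos : P.PosDef)
    (hLyap : A_K.transpose * P + P * A_K = -1)
    (KK : Fin m → ℝ) (Knorm : ℝ) (hKn : ∑ i, (KK i)^2 ≤ Knorm^2)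
    (m_R C₀ C₁ na2 nb2 M : ℝ) (hmR : 0 < m_R)
    (hsa : Summable (fun k => ‖a k‖^2)) (hsb : Summable (fun k => ‖b k‖^2))
    (hna : ∑' k, ‖a k‖^2 ≤ na2 / m_R) (hnb : ∑' k, ‖b k‖^2 ≤ nb2 / m_R)
    (hM : M > 3 * (na2 + nb2 * Knorm^2) / m_R) :
    ∃ ε₀ > 0, ∃ κ > 0, ∃ C₂ > 0,
      ∀ ε : ℝ, 0 < ε → ε ≤ ε₀ →
      ∀ (X Γ : ℝ → Fin m → ℝ)
        (w r : {k : ℤ // (n₀ : ℤ) + 1 ≤ |k|} → ℝ → ℂ)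
        (v v_d z_r R V V' : ℝ → ℝ),
        (∀ t i, HasDerivAt (fun s => X s i) ((A_K.mulVec (X t)) i + Γ t i) t) →
        (∀ t k, HasDerivAt (w k)
          (lam k * w k t + a k * (v t : ℂ) + b k * (v_d t : ℂ) + r k t) t) →
        (∀ t, v_d t = ∑ i, KK i * X t i) →
        (∀ t, |v t| ≤ Real.sqrt (∑ i, (X t i)^2)) →
        (∀ t, ∑ i, (Γ t i)^2 ≤ C₀^2 * R t + 2 * (z_r t)^2) →
        (∀ t, Summable (fun k => ‖r k t‖^2)) →
        (∀ t, ∑' k, ‖r k t‖^2 ≤ R t / m_R) →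
        (∀ t, Summable (fun k => ‖w k t‖^2)) →
        (∀ t, 0 ≤ R t) →
        (∀ t, R t ≤ ε^2 * C₁^2 * ((∑ i, (X t i)^2) + ∑' k, ‖w k t‖^2)) →
        (∀ t, V t = M * (∑ i, ∑ j, X t i * P i j * X t j)
            + (1/2) * ∑' k, ‖w k t‖^2) →
        (∀ t, HasDerivAt V (V' t) t) →
        ∀ t, V' t ≤ -2 * κ * V t + C₂ * (z_r t)^2 :=
  stmt_9_general m n₀ lam a b hlam P A_K hLyap KK Knorm hKn m_R C₀ C₁ na2 nb2 M hmR hsa hsb hna hnb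
    hM
end

section
/- For α > 1, L > 0, and k ∈ ℤ, let μ_k = (1/(2L)) log((α-1)/(α+1)) + i kπ/L. Then the complex numbers (sinh(μ_k x), μ_k sinh(μ_k x))/B_k, k ∈ ℤ, where B_k = (1/(L√(2β))) √((β²L² + k²π²) sinh(2βL)) and β = -(1/(2L)) log((α-1)/(α+1)) > 0, are unit-norm eigenvectors of the operator A_tr(w¹,w²) = (w², (w¹)'') with domain {(w¹,w²) ∈ H : w¹ ∈ H², w² ∈ H¹, w²(0)=0, (w¹)'(L)+αw²(L)=0}, associated with the eigenvalues μ_k; i.e., each μ_k is an eigenvalue of A_tr with eigenvector φ_k = B_k^{-1}(sinh(μ_k ·), μ_k sinh(μ_k ·)). -/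
/-! For every `μ`, `w = sinh (μ ·)` vanishes at `0` and solves `w'' = μ² w`, so `(w, μ w)`
solves the eigenvalue equation in the interior. Writing `cosh` and `sinh` through `exp`, the
boundary condition `w'(L) + α μ w(L) = 0` becomes `e^{2μL} = (α - 1)/(α + 1)`, which is how `μ_k`
is chosen. For the normalisation, `‖cosh z‖² + ‖sinh z‖² = cosh (2 re z)`, so the energy of
`(w, μ w)` on `[0, L]` is `‖μ‖² sinh (2 re μ L) / (2 re μ)`, and `B_k` is its square root. -/

namespace Complex

theorem norm_cosh_sq_add_norm_sinh_sq (z : ℂ) :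
    ‖cosh z‖ ^ 2 + ‖sinh z‖ ^ 2 = Real.cosh (2 * z.re) := by
  apply ofReal_injective
  rw [ofReal_add, Complex.sq_norm, Complex.sq_norm, normSq_eq_conj_mul_self,
    normSq_eq_conj_mul_self, ← cosh_conj, ← sinh_conj, ← cosh_add, add_comm, add_conj, ofReal_cosh]

theorem cosh_add_mul_sinh_eq_zero_of_exp_two_mul {a z : ℂ} (ha : a + 1 ≠ 0)
    (h : exp (2 * z) = (a - 1) / (a + 1)) : cosh z + a * sinh z = 0 := by
  have h2 : exp z * exp z * (a + 1) = a - 1 := by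
    rw [← exp_add, ← two_mul, h, div_mul_cancel₀ _ ha]
  rw [cosh, sinh, exp_neg]
  field_simp
  linear_combination h2

theorem hasDerivAt_sinh_const_mul_ofReal (μ : ℂ) (x : ℝ) :
    HasDerivAt (fun t : ℝ => sinh (μ * t)) (μ * cosh (μ * x)) x := by
  simpa [mul_comm] using (((hasDerivAt_id (x : ℂ)).const_mul μ).csinh).comp_ofReal

theorem hasDerivAt_cosh_const_mul_ofReal (μ : ℂ) (x : ℝ) :
    HasDerivAt (fun t : ℝ => cosh (μ * t)) (μ * sinh (μ * x)) x := by
  simpa [mul_comm] using (((hasDerivAt_id (x : ℂ)).const_mul μ).ccosh).comp_ofReal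

end Complex

open Complex in
/-- `μ_k`, with `r` standing for `(α - 1)/(α + 1)`. -/
noncomputable def eigenvalueTr (L r : ℝ) (k : ℤ) : ℂ :=
  ((1 / (2 * L) * Real.log r : ℝ) : ℂ) + I * k * Real.pi / L

theorem re_eigenvalueTr (L r : ℝ) (k : ℤ) :
    (eigenvalueTr L r k).re = 1 / (2 * L) * Real.log r := by
  simp [eigenvalueTr]

theorem im_eigenvalueTr (L r : ℝ) (k : ℤ) : (eigenvalueTr L r k).im = k * Real.pi / L := by
  simp [eigenvalueTr]

open Complex in
theorem exp_two_mul_eigenvalueTr_mul {L r : ℝ} (hL : L ≠ 0) (hr : 0 < r) (k : ℤ) :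
    exp (2 * (eigenvalueTr L r k * L)) = r := by
  have hlog : 2 * (eigenvalueTr L r k * L) = (Real.log r : ℂ) + k * (2 * Real.pi * I) := by
    have : (L : ℂ) ≠ 0 := by exact_mod_cast hL
    rw [eigenvalueTr]
    push_cast
    field_simp
  rw [hlog, exp_add, exp_int_mul_two_pi_mul_I, mul_one, ← ofReal_exp, Real.exp_log hr]

theorem integral_cosh_const_mul {c : ℝ} (hc : c ≠ 0) (L : ℝ) :
    ∫ x in (0 : ℝ)..L, Real.cosh (c * x) = Real.sinh (c * L) / c := by
  have hderiv (x : ℝ) : HasDerivAt (fun t => Real.sinh (c * t) / c) (Real.cosh (c * x)) x :=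
    (((hasDerivAt_id' x).const_mul c).sinh.div_const c).congr_deriv (by field_simp)
  rw [intervalIntegral.integral_eq_sub_of_hasDerivAt (fun x _ => hderiv x)
    ((by fun_prop : Continuous fun x => Real.cosh (c * x)).intervalIntegrable _ _)]
  simp

open Complex in
theorem integral_norm_mul_cosh_sq_add_norm_mul_sinh_sq {μ : ℂ} (hμ : μ.re ≠ 0) (L : ℝ) :
    ∫ x in (0 : ℝ)..L, (‖μ * cosh (μ * x)‖ ^ 2 + ‖μ * sinh (μ * x)‖ ^ 2)
      = ‖μ‖ ^ 2 * (Real.sinh (2 * μ.re * L) / (2 * μ.re)) := by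
  have hpointwise (x : ℝ) : ‖μ * cosh (μ * x)‖ ^ 2 + ‖μ * sinh (μ * x)‖ ^ 2
      = ‖μ‖ ^ 2 * Real.cosh (2 * μ.re * x) := by
    rw [norm_mul, norm_mul, mul_pow, mul_pow, ← mul_add, norm_cosh_sq_add_norm_sinh_sq,
      re_mul_ofReal, mul_assoc]
  simp_rw [hpointwise]
  rw [intervalIntegral.integral_const_mul, integral_cosh_const_mul (by simpa using hμ)]

/-- For `α > 1`, the vectors `φ_k = B_k⁻¹ (sinh(μ_k ·), μ_k sinh(μ_k ·))` are unit-norm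
eigenvectors of the undamped wave operator `A_tr(w¹,w²) = (w², (w¹)'')` (with boundary
conditions `w¹(0) = 0`, `w²(0) = 0`, `(w¹)'(L) + α w²(L) = 0`) for the eigenvalues
`μ_k = (1/(2L)) log((α-1)/(α+1)) + i kπ/L`. -/
theorem stmt_14 (L α : ℝ) (hL : 0 < L) (hα : 1 < α) (k : ℤ)
    (β : ℝ) (hβ : β = -(1/(2*L)) * Real.log ((α-1)/(α+1)))
    (μ : ℂ) (hμ : μ = ((1/(2*L)) * Real.log ((α-1)/(α+1)) : ℝ)
      + Complex.I * (k : ℂ) * (Real.pi : ℂ) / (L : ℂ))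
    (B : ℝ) (hB : B = (1/(L * Real.sqrt (2*β))) *
      Real.sqrt ((β^2 * L^2 + (k:ℝ)^2 * Real.pi^2) * Real.sinh (2*β*L)))
    (φ1 φ2 d1 : ℝ → ℂ)
    (hφ1 : ∀ x : ℝ, φ1 x = Complex.sinh (μ * (x : ℂ)) / (B : ℂ))
    (hφ2 : ∀ x : ℝ, φ2 x = μ * Complex.sinh (μ * (x : ℂ)) / (B : ℂ))
    (hd1 : ∀ x : ℝ, d1 x = μ * Complex.cosh (μ * (x : ℂ)) / (B : ℂ)) :
    0 < β ∧
    φ1 0 = 0 ∧ φ2 0 = 0 ∧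
    (∀ x : ℝ, HasDerivAt φ1 (d1 x) x) ∧
    (∀ x : ℝ, HasDerivAt d1 (μ * φ2 x) x) ∧
    (∀ x : ℝ, φ2 x = μ * φ1 x) ∧
    d1 L + (α : ℂ) * φ2 L = 0 ∧
    (∫ x in (0:ℝ)..L, (‖d1 x‖^2 + ‖φ2 x‖^2)) = 1 := by
  set r := (α - 1) / (α + 1)
  have hr_pos : 0 < r := div_pos (by linarith) (by linarith)
  have hμ_eq : μ = eigenvalueTr L r k := hμ
  have hβ_pos : 0 < β := by
    have hlog : Real.log r < 0 :=
      Real.log_neg hr_pos ((div_lt_one (by linarith)).2 (by linarith))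
    rw [hβ]
    nlinarith [(by positivity : (0 : ℝ) < 1 / (2 * L))]
  have hμ_re : μ.re = -β := by rw [hμ_eq, re_eigenvalueTr, hβ, neg_mul, neg_neg]
  have hsinh_pos : 0 < Real.sinh (2 * β * L) := Real.sinh_pos_iff.2 (by positivity)
  have hB_sq : B ^ 2 = (β ^ 2 * L ^ 2 + k ^ 2 * Real.pi ^ 2) * Real.sinh (2 * β * L)
      / (L ^ 2 * (2 * β)) := by
    rw [hB, mul_pow, div_pow, mul_pow, one_pow, Real.sq_sqrt (by positivity),
      Real.sq_sqrt (by positivity)]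
    ring
  obtain rfl : φ1 = fun x : ℝ => Complex.sinh (μ * x) / B := funext hφ1
  obtain rfl : φ2 = fun x : ℝ => μ * Complex.sinh (μ * x) / B := funext hφ2
  obtain rfl : d1 = fun x : ℝ => μ * Complex.cosh (μ * x) / B := funext hd1
  refine ⟨hβ_pos, by simp, by simp, fun x => ?_, fun x => ?_, fun x => mul_div_assoc _ _ _, ?_, ?_⟩
  · exact (Complex.hasDerivAt_sinh_const_mul_ofReal μ x).div_const _
  · exact (((Complex.hasDerivAt_cosh_const_mul_ofReal μ x).const_mul μ).div_const _).congr_deriv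
      (mul_div_assoc _ _ _)
  · have hexp : Complex.exp (2 * (μ * L)) = (α - 1) / (α + 1) := by
      rw [hμ_eq, exp_two_mul_eigenvalueTr_mul hL.ne' hr_pos]
      simp [r]
    have hboundary :=
      Complex.cosh_add_mul_sinh_eq_zero_of_exp_two_mul (by norm_cast; linarith) hexp
    linear_combination μ / B * hboundary
  · have hnorm (x : ℝ) :
        ‖μ * Complex.cosh (μ * x) / B‖ ^ 2 + ‖μ * Complex.sinh (μ * x) / B‖ ^ 2
          = (‖μ * Complex.cosh (μ * x)‖ ^ 2 + ‖μ * Complex.sinh (μ * x)‖ ^ 2) / B ^ 2 := by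
      rw [norm_div, norm_div, Complex.norm_real, Real.norm_eq_abs, div_pow, div_pow,
        sq_abs, add_div]
    simp_rw [hnorm]
    rw [intervalIntegral.integral_div,
      integral_norm_mul_cosh_sq_add_norm_mul_sinh_sq (by linarith) L, Complex.sq_norm,
      Complex.normSq_apply, hμ_re, hμ_eq, im_eigenvalueTr, hB_sq]
    rw [show 2 * -β * L = -(2 * β * L) by ring, Real.sinh_neg]
    field_simp
end

section
/- Let L > 0, α > 0, k ∈ ℤ, and set h = L/(k + 1/2). Then there exists a unique γ > 0 such that e^{γh} = α coth(γL), and for every n ∈ ℤ the complex numbers λ_n = γ + (i/L)(k + 1/2)(4n+1)π satisfy e^{λ_n h} = -α tanh(λ_n L). In particular the delay characteristic equation e^{λh} = -α tanh(λL) has infinitely many roots with real part γ > 0. -/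
/-!
For `γ > 0` the equation `e^{γh} = α coth(γL)` reads `φ γ = α` with
`φ γ = e^{γh} tanh(γL)`, which is continuous and strictly increasing on `[0, ∞)`, from
`φ 0 = 0` to `+∞`; this gives the unique `γ`. Because `h = L/(k + 1/2)`, passing from `γ`
to `λ_n` adds `(4n+1)πi` to `γh`, which flips the sign of the exponential, and
`((4n+1)k + 2n + 1/2)πi` to `γL`, which turns `tanh` into `coth` since `tanh` is
`πi`-periodic and `tanh (z + πi/2) = coth z`.
-/

section Real

open Real

theorem Real.tanh_strictMono : StrictMono tanh := fun x y hxy => by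
  have mem : ∀ z, tanh z ∈ Set.Ioo (-1) 1 := fun z => ⟨neg_one_lt_tanh z, tanh_lt_one z⟩
  rwa [← artanh_lt_artanh_iff (mem x) (mem y), artanh_tanh, artanh_tanh]

@[fun_prop]
theorem Real.continuous_tanh : Continuous tanh := by
  simp only [funext tanh_eq_sinh_div_cosh]
  exact continuous_sinh.div continuous_cosh fun x => (cosh_pos x).ne'

theorem Real.eq_mul_cosh_div_sinh_iff_mul_tanh_eq {a b x : ℝ} (hx : x ≠ 0) :
    a = b * (cosh x / sinh x) ↔ a * tanh x = b := by
  rw [tanh_eq_sinh_div_cosh, ← mul_div_assoc, eq_div_iff (sinh_ne_zero.2 hx), mul_div_assoc',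
    div_eq_iff (cosh_pos x).ne']

theorem strictMonoOn_exp_mul_mul_tanh_mul {h L : ℝ} (hh : 0 < h) (hL : 0 < L) :
    StrictMonoOn (fun γ => exp (γ * h) * tanh (γ * L)) (Set.Ici 0) := by
  intro x (hx : 0 ≤ x) y _ hxy
  have htanh : 0 ≤ tanh (x * L) := by
    simpa [tanh_zero] using tanh_strictMono.monotone (mul_nonneg hx hL.le)
  exact mul_lt_mul'' (exp_lt_exp.2 (by gcongr)) (tanh_strictMono (by gcongr)) (exp_pos _).le htanh

theorem tendsto_exp_mul_mul_tanh_mul_atTop {h L : ℝ} (hh : 0 < h) (hL : 0 < L) :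
    Filter.Tendsto (fun γ => exp (γ * h) * tanh (γ * L)) Filter.atTop Filter.atTop := by
  have hlow : Filter.Tendsto (fun γ => exp (γ * h) * tanh L) Filter.atTop Filter.atTop :=
    (tendsto_exp_atTop.comp (Filter.tendsto_id.atTop_mul_const hh)).atTop_mul_const
      (by simpa [tanh_zero] using tanh_strictMono hL)
  refine Filter.tendsto_atTop_mono' _ ?_ hlow
  filter_upwards [Filter.eventually_ge_atTop 1] with γ hγ
  gcongr
  exact tanh_strictMono.monotone (by nlinarith)

theorem existsUnique_pos_exp_mul_eq_mul_cosh_div_sinh {h L α : ℝ} (hh : 0 < h) (hL : 0 < L)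
    (hα : 0 < α) :
    ∃! γ : ℝ, 0 < γ ∧ exp (γ * h) = α * (cosh (γ * L) / sinh (γ * L)) := by
  set φ : ℝ → ℝ := fun γ => exp (γ * h) * tanh (γ * L)
  have hφ0 : φ 0 = 0 := by simp [φ]
  have hφ_iff : ∀ γ, 0 < γ →
      (exp (γ * h) = α * (cosh (γ * L) / sinh (γ * L)) ↔ φ γ = α) :=
    fun γ hγ => eq_mul_cosh_div_sinh_iff_mul_tanh_eq (by positivity)
  obtain ⟨γ, hγ, hφγ⟩ : α ∈ φ '' Set.Ici 0 :=
    intermediate_value_Ici (by fun_prop : Continuous φ).continuousOn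
      (tendsto_exp_mul_mul_tanh_mul_atTop hh hL) (by rw [Set.mem_Ici, hφ0]; exact hα.le)
  have hγ : 0 < γ := lt_of_le_of_ne hγ (by rintro rfl; exact hα.ne' (hφ0 ▸ hφγ).symm)
  refine ⟨γ, ⟨hγ, (hφ_iff γ hγ).2 hφγ⟩, fun δ ⟨hδ, hδγ⟩ => ?_⟩
  exact (strictMonoOn_exp_mul_mul_tanh_mul hh hL).injOn (Set.mem_Ici.2 hδ.le)
    (Set.mem_Ici.2 hγ.le) (((hφ_iff δ hδ).1 hδγ).trans hφγ.symm)

end Real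

section Complex

open Complex
open scoped Real

theorem Complex.tanh_add_pi_div_two_mul_I (z : ℂ) : tanh (z + π / 2 * I) = cosh z / sinh z := by
  rw [tanh_eq_sinh_div_cosh, sinh_add, cosh_add, sinh_mul_I, cosh_mul_I, cos_pi_div_two,
    sin_pi_div_two]
  simp only [mul_zero, one_mul, zero_add]
  rw [mul_comm (cosh z), mul_comm (sinh z), mul_div_mul_left _ _ I_ne_zero]

theorem Complex.tanh_add_int_add_half_mul_pi_mul_I (z : ℂ) (m : ℤ) :
    tanh (z + (m + 1 / 2) * π * I) = cosh z / sinh z := by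
  rw [show z + (m + 1 / 2) * π * I = z + π / 2 * I + m * (π * I) by ring,
    tanh_periodic.int_mul m, tanh_add_pi_div_two_mul_I]

theorem Complex.exp_add_two_int_add_one_mul_pi_mul_I (z : ℂ) (m : ℤ) :
    exp (z + (2 * m + 1) * π * I) = -exp z := by
  rw [show z + (2 * m + 1) * π * I = z + (m * (2 * (π * I)) + π * I) by ring]
  exact exp_antiperiodic.int_odd_mul_antiperiodic m z

theorem Complex.exp_mul_eq_neg_mul_tanh_mul {γ h L α : ℝ}
    (hγ : Real.exp (γ * h) = α * (Real.cosh (γ * L) / Real.sinh (γ * L))) {z : ℂ} {m j : ℤ}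
    (hzh : z * h = γ * h + (2 * m + 1) * π * I) (hzL : z * L = γ * L + (j + 1 / 2) * π * I) :
    exp (z * h) = -α * tanh (z * L) := by
  rw [hzh, hzL, exp_add_two_int_add_one_mul_pi_mul_I, tanh_add_int_add_half_mul_pi_mul_I,
    ← ofReal_mul, ← ofReal_exp, hγ]
  push_cast
  ring

end Complex

/-- Delay-induced instability: with `h = L/(k+1/2)` there is a unique `γ > 0` with
`e^{γh} = α coth(γL)`, and for every `n ∈ ℤ` the (pairwise distinct) complex numbers
`λ_n = γ + (i/L)(k+1/2)(4n+1)π` satisfy `e^{λ_n h} = -α tanh(λ_n L)`; in particular the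
delay characteristic equation has infinitely many roots with real part `γ > 0`. -/
theorem stmt_16 (L α : ℝ) (hL : 0 < L) (hα : 0 < α) (k : ℤ) (hk : 0 ≤ k)
    (h : ℝ) (hh : h = L / ((k:ℝ) + 1/2)) :
    (∃! γ : ℝ, 0 < γ ∧
      Real.exp (γ * h) = α * (Real.cosh (γ*L) / Real.sinh (γ*L))) ∧
    ∀ γ : ℝ, 0 < γ →
      Real.exp (γ * h) = α * (Real.cosh (γ*L) / Real.sinh (γ*L)) →
      ∀ lamn : ℤ → ℂ,
        (∀ n : ℤ, lamn n =
          (γ:ℂ) + Complex.I / (L:ℂ) * ((k:ℂ) + 1/2) * (4*(n:ℂ)+1) * (Real.pi:ℂ)) →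
        (∀ n : ℤ, (lamn n).re = γ ∧
          Complex.exp (lamn n * (h:ℂ)) = -(α:ℂ) * Complex.tanh (lamn n * (L:ℂ))) ∧
        Function.Injective lamn := by
  have hK : (0 : ℝ) < k + 1 / 2 := by linarith [(Int.cast_nonneg hk : (0 : ℝ) ≤ k)]
  have hL' : (L : ℂ) ≠ 0 := Complex.ofReal_ne_zero.2 hL.ne'
  have hK' : (k : ℂ) + 1 / 2 ≠ 0 := by simpa using Complex.ofReal_ne_zero.2 hK.ne'
  have hhK : (h : ℂ) * (k + 1 / 2) = L := by
    rw [hh]; push_cast; exact div_mul_cancel₀ _ hK'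
  refine ⟨existsUnique_pos_exp_mul_eq_mul_cosh_div_sinh (hh ▸ div_pos hL hK) hL hα,
    fun γ _ hγ lamn hlam => ⟨fun n => ⟨by simp [hlam], ?_⟩, fun a b hab => ?_⟩⟩
  · refine Complex.exp_mul_eq_neg_mul_tanh_mul hγ (m := 2 * n)
      (j := (4 * n + 1) * k + 2 * n) ?_ ?_
    · rw [hlam]; push_cast; field_simp
      linear_combination (2 * Complex.I * (4 * n + 1) * Real.pi) * hhK
    · rw [hlam]; push_cast; field_simp; ring
  · rw [hlam, hlam] at hab
    have hslope : Complex.I / L * ((k : ℂ) + 1 / 2) * Real.pi ≠ 0 :=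
      mul_ne_zero (mul_ne_zero (div_ne_zero Complex.I_ne_zero hL') hK')
        (Complex.ofReal_ne_zero.2 Real.pi_ne_zero)
    have hdiff : 4 * (Complex.I / L * ((k : ℂ) + 1 / 2) * Real.pi) * ((a : ℂ) - b) = 0 := by
      linear_combination hab
    exact_mod_cast sub_eq_zero.1
      ((mul_eq_zero.1 hdiff).resolve_left (mul_ne_zero (by norm_num) hslope))
end

section
/- Let κ, γ, η ∈ ℝ with 0 ≤ ηκ < κ < γ, and let u : [0,∞) → ℝ≥0 satisfy u(s) ≤ C₁ e^{-κs} + C₂ sup_{0 ≤ τ ≤ s} e^{-ηκ(s-τ)} z(τ) for a nonnegative bounded function z and constants C₁, C₂ ≥ 0. Then there exists C > 0 (depending only on κ, γ, η, C₁, C₂) such that for all t ≥ 0: ∫₀^t e^{-γ(t-s)} u(s) ds ≤ C e^{-κt} + C sup_{0 ≤ τ ≤ t} e^{-ηκ(t-τ)} z(τ). -/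
/-!
Factor the kernel as `e^{-γ(t-s)} e^{-κs} = e^{-κt} e^{-(γ-κ)(t-s)}`, and observe that the
weighted supremum `sup_{τ ≤ s} e^{-ηκ(s-τ)} z τ` is at most `e^{ηκ(t-s)}` times the one at time
`t ≥ s`. The integrand is then dominated by `e^{-κt}` and the supremum at `t`, each times a kernel
`e^{-(γ-c)(t-s)}` with `c < γ`, whose integral over `[0, t]` is at most `1/(γ-c)`.
-/

open MeasureTheory Set Real

lemma integral_exp_neg_mul_sub_le {c : ℝ} (hc : 0 < c) (t : ℝ) :
    ∫ s in (0:ℝ)..t, exp (-c * (t - s)) ≤ c⁻¹ := by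
  have hderiv : ∀ s, HasDerivAt (fun s => c⁻¹ * exp (-c * (t - s))) (exp (-c * (t - s))) s := by
    intro s
    exact ((((hasDerivAt_id' s).const_sub t).const_mul (-c)).exp.const_mul c⁻¹).congr_deriv
      (by field_simp)
  rw [intervalIntegral.integral_eq_sub_of_hasDerivAt (fun s _ => hderiv s)
    (Continuous.intervalIntegrable (by fun_prop) _ _)]
  simp only [sub_self, mul_zero, exp_zero, mul_one]
  exact sub_le_self _ (by positivity)

lemma integral_exp_kernel_mul_le {γ a b A B t : ℝ} {u : ℝ → ℝ} (ha : a < γ) (hb : b < γ)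
    (hA : 0 ≤ A) (hB : 0 ≤ B) (ht : 0 ≤ t)
    (hu : ∀ s ∈ Icc 0 t, u s ≤ A * exp (a * (t - s)) + B * exp (b * (t - s))) :
    ∫ s in (0:ℝ)..t, exp (-γ * (t - s)) * u s ≤ A / (γ - a) + B / (γ - b) := by
  have hγa := sub_pos.2 ha
  have hγb := sub_pos.2 hb
  by_cases hint : IntervalIntegrable (fun s => exp (-γ * (t - s)) * u s) volume 0 t
  swap
  · rw [intervalIntegral.integral_undef hint]
    positivity
  have hdom : ∀ s ∈ Icc 0 t, exp (-γ * (t - s)) * u s ≤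
      A * exp (-(γ - a) * (t - s)) + B * exp (-(γ - b) * (t - s)) := by
    intro s hs
    calc exp (-γ * (t - s)) * u s
        ≤ exp (-γ * (t - s)) * (A * exp (a * (t - s)) + B * exp (b * (t - s))) :=
          mul_le_mul_of_nonneg_left (hu s hs) (exp_pos _).le
      _ = A * exp (-(γ - a) * (t - s)) + B * exp (-(γ - b) * (t - s)) := by
          rw [mul_add, mul_left_comm, mul_left_comm _ B, ← exp_add, ← exp_add]
          ring_nf
  calc ∫ s in (0:ℝ)..t, exp (-γ * (t - s)) * u s
      ≤ ∫ s in (0:ℝ)..t, (A * exp (-(γ - a) * (t - s)) + B * exp (-(γ - b) * (t - s))) :=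
        intervalIntegral.integral_mono_on ht hint
          (Continuous.intervalIntegrable (by fun_prop) _ _) hdom
    _ = A * (∫ s in (0:ℝ)..t, exp (-(γ - a) * (t - s)))
          + B * ∫ s in (0:ℝ)..t, exp (-(γ - b) * (t - s)) := by
        rw [intervalIntegral.integral_add, intervalIntegral.integral_const_mul,
          intervalIntegral.integral_const_mul] <;>
        exact Continuous.intervalIntegrable (by fun_prop) _ _
    _ ≤ A * (γ - a)⁻¹ + B * (γ - b)⁻¹ := by
        gcongr
        exacts [integral_exp_neg_mul_sub_le hγa t, integral_exp_neg_mul_sub_le hγb t]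
    _ = A / (γ - a) + B / (γ - b) := by simp only [div_eq_mul_inv]

noncomputable def expWeightedSup (a : ℝ) (z : ℝ → ℝ) (t : ℝ) : ℝ :=
  sSup ((fun τ => exp (-a * (t - τ)) * z τ) '' Icc 0 t)

lemma bddAbove_expWeighted_image {a Z : ℝ} {z : ℝ → ℝ} (ha : 0 ≤ a) (hZ : ∀ s, z s ≤ Z)
    (t : ℝ) : BddAbove ((fun τ => exp (-a * (t - τ)) * z τ) '' Icc 0 t) := by
  refine ⟨max Z 0, ?_⟩
  rintro _ ⟨τ, hτ, rfl⟩
  have hexp : exp (-a * (t - τ)) ≤ 1 :=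
    exp_le_one_iff.2 (mul_nonpos_of_nonpos_of_nonneg (neg_nonpos.2 ha) (sub_nonneg.2 hτ.2))
  calc exp (-a * (t - τ)) * z τ ≤ exp (-a * (t - τ)) * max Z 0 :=
        mul_le_mul_of_nonneg_left ((hZ τ).trans (le_max_left _ _)) (exp_pos _).le
    _ ≤ max Z 0 := mul_le_of_le_one_left (le_max_right _ _) hexp

lemma expWeightedSup_nonneg {a : ℝ} {z : ℝ → ℝ} (hz : ∀ s, 0 ≤ z s) (t : ℝ) :
    0 ≤ expWeightedSup a z t :=
  Real.sSup_nonneg (by rintro _ ⟨τ, -, rfl⟩; exact mul_nonneg (exp_pos _).le (hz τ))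

lemma expWeightedSup_le_exp_mul {a Z s t : ℝ} {z : ℝ → ℝ} (ha : 0 ≤ a) (hZ : ∀ s, z s ≤ Z)
    (hs : 0 ≤ s) (hst : s ≤ t) :
    expWeightedSup a z s ≤ exp (a * (t - s)) * expWeightedSup a z t := by
  refine csSup_le ((nonempty_Icc.2 hs).image _) ?_
  rintro _ ⟨τ, hτ, rfl⟩
  have hsplit : exp (-a * (s - τ)) = exp (a * (t - s)) * exp (-a * (t - τ)) := by
    rw [← exp_add]; ring_nf
  show exp (-a * (s - τ)) * z τ ≤ _
  rw [hsplit, mul_assoc]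
  exact mul_le_mul_of_nonneg_left
    (le_csSup (bddAbove_expWeighted_image ha hZ t) ⟨τ, ⟨hτ.1, hτ.2.trans hst⟩, rfl⟩)
    (exp_pos _).le

theorem stmt_19 (κ γ η C₁ C₂ : ℝ)
    (hηκ : 0 ≤ η * κ) (h1 : η * κ < κ) (h2 : κ < γ)
    (hC₁ : 0 ≤ C₁) (hC₂ : 0 ≤ C₂) :
    ∃ C > 0, ∀ u z : ℝ → ℝ,
      (∀ s : ℝ, 0 ≤ s → 0 ≤ u s) → (∀ s : ℝ, 0 ≤ z s) → (∃ Z : ℝ, ∀ s : ℝ, z s ≤ Z) →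
      (∀ s : ℝ, 0 ≤ s → u s ≤ C₁ * Real.exp (-κ * s) +
        C₂ * sSup ((fun τ => Real.exp (-(η*κ)*(s-τ)) * z τ) '' Set.Icc 0 s)) →
      ∀ t : ℝ, 0 ≤ t →
        (∫ s in (0:ℝ)..t, Real.exp (-γ*(t-s)) * u s) ≤
          C * Real.exp (-κ * t) +
          C * sSup ((fun τ => Real.exp (-(η*κ)*(t-τ)) * z τ) '' Set.Icc 0 t) := by
  have hγκ : 0 < γ - κ := sub_pos.2 h2
  have hγηκ : 0 < γ - η * κ := by linarith
  set C := C₁ / (γ - κ) + C₂ / (γ - η * κ) + 1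
  refine ⟨C, by positivity, fun u z _ hz ⟨Z, hZ⟩ hu t ht => ?_⟩
  set W := expWeightedSup (η * κ) z
  have hWt : 0 ≤ W t := expWeightedSup_nonneg hz t
  have hdom : ∀ s ∈ Icc 0 t, u s ≤
      C₁ * exp (-κ * t) * exp (κ * (t - s)) + C₂ * W t * exp (η * κ * (t - s)) := by
    intro s ⟨hs, hst⟩
    have hexp : exp (-κ * s) = exp (-κ * t) * exp (κ * (t - s)) := by
      rw [← exp_add]; ring_nf
    calc u s ≤ C₁ * exp (-κ * s) + C₂ * W s := hu s hs
      _ ≤ C₁ * exp (-κ * s) + C₂ * (exp (η * κ * (t - s)) * W t) := by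
          gcongr; exact expWeightedSup_le_exp_mul hηκ hZ hs hst
      _ = _ := by rw [hexp]; ring
  calc ∫ s in (0:ℝ)..t, exp (-γ * (t - s)) * u s
      ≤ C₁ * exp (-κ * t) / (γ - κ) + C₂ * W t / (γ - η * κ) :=
        integral_exp_kernel_mul_le h2 (by linarith) (by positivity) (by positivity) ht hdom
    _ = C₁ / (γ - κ) * exp (-κ * t) + C₂ / (γ - η * κ) * W t := by ring
    _ ≤ C * exp (-κ * t) + C * W t := by
        gcongr <;> linarith [div_nonneg hC₁ hγκ.le, div_nonneg hC₂ hγηκ.le]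
end
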